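/- Let k ∈ ℝ and define Y₀ : ℂ \ {0} → ℂ by Y₀(x) = x⁻¹·exp(−k·x·conj(x)). Then Y₀ is smooth as a map ℂ \ {0} → ℂ over ℝ, and for every x ≠ 0 the iterated Wirtinger derivative satisfies ∂_x ∂_{x̄} Y₀ (x) = k²·|x|²·Y₀(x). Equivalently, Y₀ is an eigenfunction of the conical model Laplacian Δ₀ = −(1/(ρ₀|x|²))·∂_x∂_{x̄} with eigenvalue λ = −k²/ρ₀ for any ρ₀ > 0. -/

import Mathlib

open Complex

/-- The Wirtinger derivative `∂_x F(z) = (1/2)(DF(z)(1) − i·DF(z)(i))`,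
where `DF(z)` is the real Fréchet derivative of `F` at `z`. -/
noncomputable def wirtingerDz (F : ℂ → ℂ) (z : ℂ) : ℂ :=
  (1 / 2) * (fderiv ℝ F z 1 - Complex.I * fderiv ℝ F z Complex.I)

/-- The conjugate Wirtinger derivative `∂_x̄ F(z) = (1/2)(DF(z)(1) + i·DF(z)(i))`. -/
noncomputable def wirtingerDzBar (F : ℂ → ℂ) (z : ℂ) : ℂ :=
  (1 / 2) * (fderiv ℝ F z 1 + Complex.I * fderiv ℝ F z Complex.I)

/-- Derivative of the inner quadratic map `z ↦ -k·z·z̄`. -/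
lemma hasFDerivAt_inner_model (k : ℝ) (x : ℂ) :
    HasFDerivAt (fun z : ℂ => -(k:ℂ) * z * (starRingEnd ℂ) z)
      ((-(k:ℂ) * x) • Complex.conjCLE.toContinuousLinearMap +
        ((starRingEnd ℂ) x) • ((-(k:ℂ)) • ContinuousLinearMap.id ℝ ℂ)) x := by
  have hc : HasFDerivAt (fun z : ℂ => -(k:ℂ) * z)
      ((-(k:ℂ)) • ContinuousLinearMap.id ℝ ℂ) x := (hasFDerivAt_id x).const_mul (-(k:ℂ))
  have hd : HasFDerivAt (fun z : ℂ => (starRingEnd ℂ) z)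
      (Complex.conjCLE.toContinuousLinearMap) x := Complex.conjCLE.hasFDerivAt
  exact hc.mul hd

/-- Derivative of the exponential factor `z ↦ exp(-k·z·z̄)`. -/
lemma hasFDerivAt_exp_model (k : ℝ) (x : ℂ) :
    HasFDerivAt (fun z : ℂ => Complex.exp (-(k:ℂ) * z * (starRingEnd ℂ) z))
      ((ContinuousLinearMap.restrictScalars ℝ
          (ContinuousLinearMap.smulRight (1 : ℂ →L[ℂ] ℂ)
            (Complex.exp (-(k:ℂ) * x * (starRingEnd ℂ) x)))).comp
        ((-(k:ℂ) * x) • Complex.conjCLE.toContinuousLinearMap +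
          ((starRingEnd ℂ) x) • ((-(k:ℂ)) • ContinuousLinearMap.id ℝ ℂ))) x :=
  ((Complex.hasDerivAt_exp
      (-(k:ℂ) * x * (starRingEnd ℂ) x)).hasFDerivAt.restrictScalars ℝ).comp x
    (hasFDerivAt_inner_model k x)

/-- Derivative of the full model function `z ↦ z⁻¹·exp(-k·z·z̄)` away from the origin. -/
lemma hasFDerivAt_model (k : ℝ) (x : ℂ) (hx : x ≠ 0) :
    HasFDerivAt (fun z : ℂ => z⁻¹ * Complex.exp (-(k:ℂ) * z * (starRingEnd ℂ) z))
      (x⁻¹ • ((ContinuousLinearMap.restrictScalars ℝ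
            (ContinuousLinearMap.smulRight (1 : ℂ →L[ℂ] ℂ)
              (Complex.exp (-(k:ℂ) * x * (starRingEnd ℂ) x)))).comp
          ((-(k:ℂ) * x) • Complex.conjCLE.toContinuousLinearMap +
            ((starRingEnd ℂ) x) • ((-(k:ℂ)) • ContinuousLinearMap.id ℝ ℂ))) +
        Complex.exp (-(k:ℂ) * x * (starRingEnd ℂ) x) •
          (ContinuousLinearMap.restrictScalars ℝ
            (ContinuousLinearMap.smulRight (1 : ℂ →L[ℂ] ℂ) (-(x ^ 2)⁻¹)))) x :=
  ((hasDerivAt_inv hx).hasFDerivAt.restrictScalars ℝ).mul (hasFDerivAt_exp_model k x)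

/-- The first conjugate Wirtinger derivative of `Y₀` is `-k·exp(-k·x·x̄)`. -/
lemma wirtingerDzBar_model (k : ℝ) (Y₀ : ℂ → ℂ)
    (hY₀ : ∀ x : ℂ, x ≠ 0 → Y₀ x = x⁻¹ * Complex.exp (-(k : ℂ) * x * (starRingEnd ℂ) x))
    (x : ℂ) (hx : x ≠ 0) :
    wirtingerDzBar Y₀ x = -(k:ℂ) * Complex.exp (-(k:ℂ) * x * (starRingEnd ℂ) x) := by
  have hev : Y₀ =ᶠ[nhds x]
      (fun z : ℂ => z⁻¹ * Complex.exp (-(k:ℂ) * z * (starRingEnd ℂ) z)) := by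
    filter_upwards [isOpen_ne.mem_nhds hx] with z hz using hY₀ z hz
  have hfd := ((hasFDerivAt_model k x hx).congr_of_eventuallyEq hev).fderiv
  rw [wirtingerDzBar, hfd]
  simp only [ContinuousLinearMap.add_apply, ContinuousLinearMap.smul_apply,
    ContinuousLinearMap.coe_restrictScalars', ContinuousLinearMap.comp_apply,
    ContinuousLinearMap.smulRight_apply,
    ContinuousLinearMap.one_apply, ContinuousLinearMap.id_apply,
    ContinuousLinearEquiv.coe_coe, Complex.conjCLE_apply, map_one, Complex.conj_I,
    smul_eq_mul]
  field_simp
  ring_nf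
  simp only [Complex.I_sq]
  ring

/-- The iterated Wirtinger derivative of `Y₀` equals `k²·x̄·exp(-k·x·x̄)`. -/
lemma wirtingerDz_wirtingerDzBar_model (k : ℝ) (Y₀ : ℂ → ℂ)
    (hY₀ : ∀ x : ℂ, x ≠ 0 → Y₀ x = x⁻¹ * Complex.exp (-(k : ℂ) * x * (starRingEnd ℂ) x))
    (x : ℂ) (hx : x ≠ 0) :
    wirtingerDz (wirtingerDzBar Y₀) x
      = (k:ℂ)^2 * (starRingEnd ℂ) x * Complex.exp (-(k:ℂ) * x * (starRingEnd ℂ) x) := by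
  have hev : wirtingerDzBar Y₀ =ᶠ[nhds x]
      (fun z : ℂ => -(k:ℂ) * Complex.exp (-(k:ℂ) * z * (starRingEnd ℂ) z)) := by
    filter_upwards [isOpen_ne.mem_nhds hx] with z hz
      using wirtingerDzBar_model k Y₀ hY₀ z hz
  have hH := (hasFDerivAt_exp_model k x).const_mul (-(k:ℂ))
  have hfd := (hH.congr_of_eventuallyEq hev).fderiv
  rw [wirtingerDz, hfd]
  simp only [ContinuousLinearMap.add_apply, ContinuousLinearMap.smul_apply,
    ContinuousLinearMap.coe_restrictScalars', ContinuousLinearMap.comp_apply,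
    ContinuousLinearMap.smulRight_apply,
    ContinuousLinearMap.one_apply, ContinuousLinearMap.id_apply,
    ContinuousLinearEquiv.coe_coe, Complex.conjCLE_apply, map_one, Complex.conj_I,
    smul_eq_mul]
  ring_nf
  simp only [Complex.I_sq]
  ring

/-- For `Y₀(x) = x⁻¹·exp(−k·x·x̄)`, the function `Y₀` is smooth on `ℂ \ {0}`,
satisfies `∂_x ∂_x̄ Y₀ = k²|x|²·Y₀`, and equivalently is an eigenfunction of the conical
model Laplacian `Δ₀ = −(1/(ρ₀|x|²))∂_x∂_x̄` with eigenvalue `λ = −k²/ρ₀` for any `ρ₀ > 0`. -/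
theorem model_solution_eigenfunction (k : ℝ)
    (Y₀ : ℂ → ℂ)
    (hY₀ : ∀ x : ℂ, x ≠ 0 → Y₀ x = x⁻¹ * Complex.exp (-(k : ℂ) * x * (starRingEnd ℂ) x)) :
    ContDiffOn ℝ (⊤ : ℕ∞) Y₀ {x : ℂ | x ≠ 0} ∧
    (∀ x : ℂ, x ≠ 0 →
      wirtingerDz (wirtingerDzBar Y₀) x
        = (k : ℂ) ^ 2 * ((‖x‖ : ℝ) : ℂ) ^ 2 * Y₀ x) ∧
    (∀ ρ₀ : ℝ, 0 < ρ₀ → ∀ x : ℂ, x ≠ 0 →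
      -(1 / ((ρ₀ : ℂ) * ((‖x‖ : ℝ) : ℂ) ^ 2)) * wirtingerDz (wirtingerDzBar Y₀) x
        = (-(k : ℂ) ^ 2 / (ρ₀ : ℂ)) * Y₀ x) := by
  have key : ∀ x : ℂ, x ≠ 0 →
      wirtingerDz (wirtingerDzBar Y₀) x
        = (k : ℂ) ^ 2 * ((‖x‖ : ℝ) : ℂ) ^ 2 * Y₀ x := by
    intro x hx
    rw [wirtingerDz_wirtingerDzBar_model k Y₀ hY₀ x hx, hY₀ x hx]
    have habs : (((‖x‖ : ℝ)) : ℂ) ^ 2 = x * (starRingEnd ℂ) x := by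
      rw [← Complex.ofReal_pow, Complex.sq_norm, Complex.mul_conj]
    rw [habs]
    field_simp
  refine ⟨?_, key, ?_⟩
  · have hsm : ContDiffOn ℝ (⊤ : ℕ∞)
        (fun z : ℂ => z⁻¹ * Complex.exp (-(k:ℂ) * z * (starRingEnd ℂ) z))
        {x : ℂ | x ≠ 0} := by
      have h1 : ContDiffOn ℝ (⊤ : ℕ∞) (fun z : ℂ => z⁻¹) {x : ℂ | x ≠ 0} :=
        contDiffOn_inv ℝ
      have h2 : ContDiff ℝ (⊤ : ℕ∞) (fun z : ℂ => Complex.exp (-(k:ℂ) * z * (starRingEnd ℂ) z)) := by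
        have hinner : ContDiff ℝ (⊤ : ℕ∞) (fun z : ℂ => -(k:ℂ) * z * (starRingEnd ℂ) z) :=
          ((contDiff_const.mul contDiff_id).mul
            Complex.conjCLE.toContinuousLinearMap.contDiff)
        have hexpR : ContDiff ℝ (⊤ : ℕ∞) Complex.exp := Complex.contDiff_exp
        exact hexpR.comp hinner
      exact h1.mul h2.contDiffOn
    exact hsm.congr (fun x hx => hY₀ x hx)
  · intro ρ₀ hρ₀ x hx
    rw [key x hx]
    have habs : (((‖x‖ : ℝ)) : ℂ) ≠ 0 := by
      simpa using norm_ne_zero_iff.mpr hx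
    have hρ : (ρ₀ : ℂ) ≠ 0 := by exact_mod_cast hρ₀.ne'
    field_simp
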